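/- Let A ∈ ℝ^{n×n} be symmetric positive definite, B ∈ ℝ^{m×n} have full row rank, and C ∈ ℝ^{l×m} have full row rank. Then the block matrix 𝒜 = [[A, Bᵀ, 0], [−B, 0, −Cᵀ], [0, C, 0]] is nonsingular. -/

import Mathlib

/-!
If `𝒜 (x, y, z) = 0`, the three block rows give `A x + Bᵀ y = 0`, `B x + Cᵀ z = 0` and `C y = 0`,
hence `xᵀ A x = -(B x)ᵀ y = (Cᵀ z)ᵀ y = zᵀ (C y) = 0`, so `x = 0` by positive definiteness.
Then `Bᵀ y = 0` and `Cᵀ z = 0`, and full row rank of `B` and `C` forces `y = 0` and `z = 0`.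
-/

open Matrix

/-- The block 3x3 saddle point matrix [[A, Bᵀ, 0], [-B, 0, -Cᵀ], [0, C, 0]]. -/
noncomputable def saddle {n m l : ℕ} (A : Matrix (Fin n) (Fin n) ℝ)
    (B : Matrix (Fin m) (Fin n) ℝ) (C : Matrix (Fin l) (Fin m) ℝ) :
    Matrix (Fin n ⊕ (Fin m ⊕ Fin l)) (Fin n ⊕ (Fin m ⊕ Fin l)) ℝ :=
  Matrix.fromBlocks A (Matrix.fromCols Bᵀ 0) (Matrix.fromRows (-B) 0)
    (Matrix.fromBlocks 0 (-Cᵀ) C 0)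

namespace Matrix

theorem mulVec_injective_of_rank_eq_card {m n K : Type*} [Fintype m] [Fintype n] [Field K]
    {M : Matrix m n K} (h : M.rank = Fintype.card n) : Function.Injective M.mulVec :=
  mulVec_injective_iff.2 <| linearIndependent_iff_card_eq_finrank_span.2 <| by
    rw [Set.finrank, ← rank_eq_finrank_span_cols, h]

theorem PosDef.eq_zero_of_dotProduct_mulVec_eq_zero {n R : Type*} [Fintype n] [CommRing R]
    [PartialOrder R] [StarRing R] {M : Matrix n n R} (hM : M.PosDef) {x : n → R}
    (hx : star x ⬝ᵥ (M *ᵥ x) = 0) : x = 0 := by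
  by_contra h
  exact (hM.dotProduct_mulVec_pos h).ne' hx

end Matrix

theorem dotProduct_mulVec_eq_zero_of_saddle {n m l R : Type*} [Fintype n] [Fintype m] [Fintype l]
    [CommRing R] {A : Matrix n n R} {B : Matrix m n R} {C : Matrix l m R}
    {x : n → R} {y : m → R} {z : l → R}
    (h₁ : A *ᵥ x + Bᵀ *ᵥ y = 0) (h₂ : B *ᵥ x + Cᵀ *ᵥ z = 0) (h₃ : C *ᵥ y = 0) :
    x ⬝ᵥ (A *ᵥ x) = 0 :=
  calc x ⬝ᵥ (A *ᵥ x) = -(B *ᵥ x ⬝ᵥ y) := by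
        rw [eq_neg_of_add_eq_zero_left h₁, dotProduct_neg, dotProduct_mulVec, vecMul_transpose]
    _ = Cᵀ *ᵥ z ⬝ᵥ y := by rw [eq_neg_of_add_eq_zero_left h₂, neg_dotProduct, neg_neg]
    _ = 0 := by rw [mulVec_transpose, ← dotProduct_mulVec, h₃, dotProduct_zero]

section saddle

variable {n m l : ℕ} {A : Matrix (Fin n) (Fin n) ℝ} {B : Matrix (Fin m) (Fin n) ℝ}
  {C : Matrix (Fin l) (Fin m) ℝ}

theorem saddle_mulVec_sumElim (x : Fin n → ℝ) (y : Fin m → ℝ) (z : Fin l → ℝ) :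
    saddle A B C *ᵥ Sum.elim x (Sum.elim y z) =
      Sum.elim (A *ᵥ x + Bᵀ *ᵥ y) (Sum.elim (-(B *ᵥ x + Cᵀ *ᵥ z)) (C *ᵥ y)) := by
  simp only [saddle, fromBlocks_mulVec, Sum.elim_comp_inl, Sum.elim_comp_inr,
    fromCols_mulVec_sumElim, fromRows_mulVec, zero_mulVec, neg_mulVec, add_zero, zero_add,
    ← Sum.elim_add_add, neg_add]

theorem eq_zero_of_saddle_mulVec_eq_zero (hA : A.PosDef) (hB : B.rank = m) (hC : C.rank = l)
    {x : Fin n → ℝ} {y : Fin m → ℝ} {z : Fin l → ℝ}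
    (h : saddle A B C *ᵥ Sum.elim x (Sum.elim y z) = 0) : x = 0 ∧ y = 0 ∧ z = 0 := by
  rw [saddle_mulVec_sumElim, ← Sum.elim_zero_zero, Sum.elim_eq_iff, ← Sum.elim_zero_zero,
    Sum.elim_eq_iff, neg_eq_zero] at h
  obtain ⟨h₁, h₂, h₃⟩ := h
  obtain rfl : x = 0 := hA.eq_zero_of_dotProduct_mulVec_eq_zero <| by
    rw [star_trivial]
    exact dotProduct_mulVec_eq_zero_of_saddle h₁ h₂ h₃
  rw [mulVec_zero, zero_add] at h₁ h₂
  refine ⟨rfl, mulVec_injective_of_rank_eq_card ?_ (h₁.trans (mulVec_zero _).symm),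
    mulVec_injective_of_rank_eq_card ?_ (h₂.trans (mulVec_zero _).symm)⟩
  · rw [rank_transpose, hB, Fintype.card_fin]
  · rw [rank_transpose, hC, Fintype.card_fin]

theorem saddle_mulVec_injective (hA : A.PosDef) (hB : B.rank = m) (hC : C.rank = l) :
    Function.Injective (saddle A B C).mulVec := by
  rw [← coe_mulVecLin, ← LinearMap.ker_eq_bot, ker_mulVecLin_eq_bot_iff]
  intro v hv
  rw [← Sum.elim_comp_inl_inr v, ← Sum.elim_comp_inl_inr (v ∘ Sum.inr)] at hv ⊢
  obtain ⟨hx, hy, hz⟩ := eq_zero_of_saddle_mulVec_eq_zero hA hB hC hv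
  rw [hx, hy, hz, Sum.elim_zero_zero, Sum.elim_zero_zero]

end saddle

theorem nonsingular_saddle {n m l : ℕ}
    (A : Matrix (Fin n) (Fin n) ℝ) (B : Matrix (Fin m) (Fin n) ℝ)
    (C : Matrix (Fin l) (Fin m) ℝ)
    (hA : A.PosDef) (hB : B.rank = m) (hC : C.rank = l) :
    IsUnit (saddle A B C) :=
  mulVec_injective_iff_isUnit.1 (saddle_mulVec_injective hA hB hC)
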